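/- For all integers p, q ≥ 1, the number of (p,q) Delannoy paths L with ω(L) = 1 (equivalently, the constant term D_{p,q}(0) of the polynomial D_{p,q}(t) := Σ_{L ∈ 𝒟(p,q)} t^{ω(L)−1}) equals C(p+q, q) + C(p+q−2, q−1). -/

import Mathlib

/-- A step of a lattice path: east `(1,0)`, north `(0,1)`, or diagonal `(1,1)`. -/
inductive DStep : Type
  | E | N | D
deriving DecidableEq

/-- The displacement vector of a step. -/
def stepVec : DStep → ℕ × ℕ
  | .E => (1, 0)
  | .N => (0, 1)
  | .D => (1, 1)

/-- A `(p,q)` Delannoy path: a sequence of steps `E`, `N`, `D` whose total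
displacement from `(0,0)` is `(p,q)`. -/
def IsDelannoy (p q : ℕ) (l : List DStep) : Prop :=
  (l.map stepVec).sum = (p, q)

/-- `D(p,q)`, the number of `(p,q)` Delannoy paths. -/
noncomputable def delannoyNum (p q : ℕ) : ℕ :=
  Nat.card {l : List DStep // IsDelannoy p q l}

/-- The weight of the part of a Delannoy path starting at the given lattice
point: a diagonal step starting at `(a,b)` contributes a factor `a+b+1`,
other steps contribute `1`. -/
def weightFrom : ℕ × ℕ → List DStep → ℕ
  | _, [] => 1
  | ab, s :: t => (if s = DStep.D then ab.1 + ab.2 + 1 else 1) * weightFrom (ab + stepVec s) t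

/-- The weight `ω(L)` of a Delannoy path `L` (starting at the origin): the
product over all diagonal steps going from a point `(a,b)` to `(a+1,b+1)`
of the numbers `a+b+1`. -/
def weight (l : List DStep) : ℕ := weightFrom (0, 0) l

/-- The weight generating polynomial `D_{p,q}(t) = ∑_{L ∈ 𝒟(p,q)} t^{ω(L)-1}`. -/
noncomputable def Dpoly (p q : ℕ) : Polynomial ℕ :=
  ∑ᶠ L : {l : List DStep // IsDelannoy p q l}, (Polynomial.X : Polynomial ℕ) ^ (weight L.1 - 1)

/-!
A diagonal step leaving a point `(a,b) ≠ (0,0)` multiplies the weight by `a + b + 1 ≥ 2`, and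
every other factor is positive. So `ω(L) = 1` exactly when `L` has no diagonal step except
possibly its first one: these are the `C(p+q, q)` lattice paths with steps `E`, `N`, and the
paths `D` followed by one of the `C(p+q-2, q-1)` lattice paths from `(1,1)` to `(p,q)`.
Since `ω ≥ 1`, the constant term of `D_{p,q}(t)` counts the same paths.
-/

instance : Fintype DStep :=
  ⟨{.E, .N, .D}, by intro x; cases x <;> simp⟩

lemma List.eq_replicate_of_count_eq_length {α : Type*} [DecidableEq α] {a : α} {l : List α}
    (h : l.count a = l.length) : l = List.replicate (l.count a) a :=
  List.eq_replicate_iff.2 ⟨h.symm, fun b hb => (List.count_eq_length.1 h b hb).symm⟩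

lemma sum_map_stepVec (l : List DStep) :
    (l.map stepVec).sum = (l.count .E + l.count .D, l.count .N + l.count .D) := by
  induction l with
  | nil => rfl
  | cons s t ih => cases s <;> simp [ih, stepVec, Prod.ext_iff] <;> omega

lemma isDelannoy_iff {p q : ℕ} {l : List DStep} :
    IsDelannoy p q l ↔ l.count .E + l.count .D = p ∧ l.count .N + l.count .D = q := by
  rw [IsDelannoy, sum_map_stepVec, Prod.ext_iff]

lemma length_eq_count_add_count_add_count (l : List DStep) :
    l.length = l.count .E + l.count .N + l.count .D := by
  induction l with
  | nil => rfl
  | cons s t ih => cases s <;> simp <;> omega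

lemma finite_setOf_isDelannoy (p q : ℕ) : {l : List DStep | IsDelannoy p q l}.Finite := by
  refine (List.finite_length_le DStep (p + q)).subset fun l hl => ?_
  have := length_eq_count_add_count_add_count l
  rw [Set.mem_ofPred_eq, isDelannoy_iff] at hl
  simp only [Set.mem_ofPred_eq]
  omega

lemma weightFrom_pos (ab : ℕ × ℕ) (l : List DStep) : 0 < weightFrom ab l := by
  induction l generalizing ab with
  | nil => simp [weightFrom]
  | cons s t ih => exact Nat.mul_pos (by split_ifs <;> omega) (ih _)

lemma weightFrom_eq_one_iff {ab : ℕ × ℕ} (hab : 0 < ab.1 + ab.2) (l : List DStep) :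
    weightFrom ab l = 1 ↔ l.count .D = 0 := by
  induction l generalizing ab with
  | nil => simp [weightFrom]
  | cons s t ih =>
    have hab' : 0 < (ab + stepVec s).1 + (ab + stepVec s).2 := by
      simp only [Prod.fst_add, Prod.snd_add]; omega
    cases s <;> simp [weightFrom, ih hab', mul_eq_one]
    omega

lemma weight_cons_eq_one_iff (s : DStep) (t : List DStep) :
    weight (s :: t) = 1 ↔ t.count .D = 0 := by
  have h : 0 < (stepVec s).1 + (stepVec s).2 := by cases s <;> simp [stepVec]
  simp [weight, weightFrom, Prod.mk_zero_zero, ← weightFrom_eq_one_iff h]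

def latticePaths (p q : ℕ) : Set (List DStep) :=
  {l | l.count .E = p ∧ l.count .N = q ∧ l.count .D = 0}

lemma latticePaths_subset (p q : ℕ) : latticePaths p q ⊆ {l | IsDelannoy p q l} := by
  rintro l ⟨hE, hN, hD⟩
  simp only [Set.mem_ofPred_eq, isDelannoy_iff]
  omega

lemma latticePaths_finite (p q : ℕ) : (latticePaths p q).Finite :=
  (finite_setOf_isDelannoy p q).subset (latticePaths_subset p q)

lemma latticePaths_zero_left (q : ℕ) : latticePaths 0 q = {List.replicate q .N} := by
  ext l
  constructor
  · rintro ⟨hE, rfl, hD⟩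
    exact List.eq_replicate_of_count_eq_length
      (by rw [length_eq_count_add_count_add_count]; omega)
  · rintro rfl
    simp [latticePaths, List.count_replicate]

lemma latticePaths_zero_right (p : ℕ) : latticePaths p 0 = {List.replicate p .E} := by
  ext l
  constructor
  · rintro ⟨rfl, hN, hD⟩
    exact List.eq_replicate_of_count_eq_length
      (by rw [length_eq_count_add_count_add_count]; omega)
  · rintro rfl
    simp [latticePaths, List.count_replicate]

lemma latticePaths_succ_succ (p q : ℕ) :
    latticePaths (p + 1) (q + 1) =
      List.cons .E '' latticePaths p (q + 1) ∪ List.cons .N '' latticePaths (p + 1) q := by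
  ext (_ | ⟨s, t⟩)
  · simp [latticePaths]
  · cases s <;> simp [latticePaths]

lemma ncard_latticePaths (p q : ℕ) : (latticePaths p q).ncard = (p + q).choose q := by
  induction p generalizing q with
  | zero => simp [latticePaths_zero_left]
  | succ p ihp =>
    induction q with
    | zero => simp [latticePaths_zero_right]
    | succ q ihq =>
      have hdisj : Disjoint (List.cons .E '' latticePaths p (q + 1))
          (List.cons .N '' latticePaths (p + 1) q) := by
        simp [Set.disjoint_left]
      rw [latticePaths_succ_succ, Set.ncard_union_eq hdisj ((latticePaths_finite _ _).image _)
        ((latticePaths_finite _ _).image _), Set.ncard_image_of_injective _ List.cons_injective,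
        Set.ncard_image_of_injective _ List.cons_injective, ihp, ihq]
      simp only [← Nat.add_assoc, Nat.add_right_comm p 1 q]
      rw [Nat.choose_succ_succ (p + q + 1) q, add_comm]

lemma setOf_isDelannoy_weight_eq_one {p q : ℕ} (hp : 1 ≤ p) (hq : 1 ≤ q) :
    {l | IsDelannoy p q l ∧ weight l = 1} =
      latticePaths p q ∪ List.cons .D '' latticePaths (p - 1) (q - 1) := by
  ext (_ | ⟨s, t⟩)
  · simp [isDelannoy_iff, latticePaths]
    omega
  · cases s <;> simp [isDelannoy_iff, weight_cons_eq_one_iff, latticePaths] <;> omega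

lemma card_isDelannoy_weight_eq_one {p q : ℕ} (hp : 1 ≤ p) (hq : 1 ≤ q) :
    Nat.card {l : List DStep // IsDelannoy p q l ∧ weight l = 1} =
      (p + q).choose q + (p + q - 2).choose (q - 1) := by
  have hdisj : Disjoint (latticePaths p q) (List.cons .D '' latticePaths (p - 1) (q - 1)) := by
    rw [Set.disjoint_left]
    rintro _ ⟨-, -, hD⟩ ⟨t, -, rfl⟩
    simp at hD
  calc Nat.card {l : List DStep // IsDelannoy p q l ∧ weight l = 1}
      = {l | IsDelannoy p q l ∧ weight l = 1}.ncard := Nat.card_coe_set_eq _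
    _ = (p + q).choose q + (p + q - 2).choose (q - 1) := by
      rw [setOf_isDelannoy_weight_eq_one hp hq, Set.ncard_union_eq hdisj
        (latticePaths_finite _ _) ((latticePaths_finite _ _).image _),
        Set.ncard_image_of_injective _ List.cons_injective, ncard_latticePaths,
        ncard_latticePaths, show p - 1 + (q - 1) = p + q - 2 by omega]

lemma coeff_zero_Dpoly (p q : ℕ) :
    (Dpoly p q).coeff 0 = Nat.card {l : List DStep // IsDelannoy p q l ∧ weight l = 1} := by
  have : Finite {l // IsDelannoy p q l} := (finite_setOf_isDelannoy p q).to_subtype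
  have := Fintype.ofFinite {l // IsDelannoy p q l}
  have hcoeff (l : List DStep) :
      ((Polynomial.X : Polynomial ℕ) ^ (weight l - 1)).coeff 0 =
        if weight l = 1 then 1 else 0 := by
    have := weightFrom_pos (0, 0) l
    rw [Polynomial.coeff_X_pow]
    exact if_congr (by unfold weight; omega) rfl rfl
  rw [Dpoly, finsum_eq_sum_of_fintype, Polynomial.finsetSum_coeff]
  simp only [hcoeff, Finset.sum_boole, Nat.cast_id, ← Fintype.card_subtype,
    ← Nat.card_eq_fintype_card]
  exact Nat.card_congr <|
    Equiv.subtypeSubtypeEquivSubtypeInter (IsDelannoy p q) (fun l => weight l = 1)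

theorem stmt17 (p q : ℕ) (hp : 1 ≤ p) (hq : 1 ≤ q) :
    Nat.card {l : List DStep // IsDelannoy p q l ∧ weight l = 1} =
        (p + q).choose q + (p + q - 2).choose (q - 1) ∧
      (Dpoly p q).coeff 0 = (p + q).choose q + (p + q - 2).choose (q - 1) :=
  ⟨card_isDelannoy_weight_eq_one hp hq,
    (coeff_zero_Dpoly p q).trans (card_isDelannoy_weight_eq_one hp hq)⟩
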